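/- Suppose g+h solves the gauged Ricci system: Ric_Λ(g+h) - R_Λ = 𝓛_g((λ+Λ)^{-1} B_{g+h}(R_Λ)) in M and B_{g+h}(R_Λ) = 0 on ∂M. Set ω = (λ+Λ)^{-1} B_{g+h}(R_Λ). Then ω vanishes on ∂M and satisfies the linear elliptic equation B_{g+h}(𝓛_g ω) + (λ+Λ)ω = 0 in M. Consequently, if the operator ω ↦ B_{g+h}(𝓛_g ω) + (λ+Λ)ω with Dirichlet boundary condition is injective, then ω = 0 and Ric_Λ(g+h) = R_Λ. -/
import Mathlib


/-- Suppose `g+h` solves the gauged Ricci system: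
`Ric_Λ(g+h) - R_Λ = 𝓛_g((λ+Λ)⁻¹ B_{g+h}(R_Λ))` in `M` and `B_{g+h}(R_Λ) = 0` on `∂M`.
Set `ω = (λ+Λ)⁻¹ B_{g+h}(R_Λ)`.  Then `ω` vanishes on `∂M` and
`B_{g+h}(𝓛_g ω) + (λ+Λ) ω = 0` in `M`.  Consequently, if
`ω' ↦ B_{g+h}(𝓛_g ω') + (λ+Λ) ω'` with Dirichlet boundary condition is injective, then
`ω = 0` and `Ric_Λ(g+h) = R_Λ`.  Key input: the contracted Bianchi identity
`B_{g+h}(Ric_Λ(g+h)) = 0`. -/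
theorem gauge_breaking
    {S Ω Ωb : Type*} [AddCommGroup S] [Module ℝ S] [AddCommGroup Ω] [Module ℝ Ω]
    [AddCommGroup Ωb] [Module ℝ Ωb]
    (lam Λ : ℝ) (hlΛ : lam + Λ ≠ 0)
    (RicL RΛ : S)                -- the tensors Ric_Λ(g+h) and R_Λ
    (L : Ω →ₗ[ℝ] S)              -- Killing operator 𝓛_g
    (Bgh : S →ₗ[ℝ] Ω)            -- Bianchi operator B_{g+h}
    (bdry : Ω →ₗ[ℝ] Ωb)          -- restriction of a 1-form to ∂M
    (hsolve : RicL - RΛ = L ((lam + Λ)⁻¹ • Bgh RΛ))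
    (hbd : bdry (Bgh RΛ) = 0)
    (hBianchi : Bgh RicL = 0) :
    bdry ((lam + Λ)⁻¹ • Bgh RΛ) = 0
    ∧ Bgh (L ((lam + Λ)⁻¹ • Bgh RΛ)) + (lam + Λ) • ((lam + Λ)⁻¹ • Bgh RΛ) = 0
    ∧ ((∀ ω : Ω, bdry ω = 0 → Bgh (L ω) + (lam + Λ) • ω = 0 → ω = 0) →
        (lam + Λ)⁻¹ • Bgh RΛ = 0 ∧ RicL = RΛ) := by
  have h1 : bdry ((lam + Λ)⁻¹ • Bgh RΛ) = 0 := by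
    rw [map_smul, hbd, smul_zero]
  have h2 : Bgh (L ((lam + Λ)⁻¹ • Bgh RΛ)) + (lam + Λ) • ((lam + Λ)⁻¹ • Bgh RΛ) = 0 := by
    rw [← hsolve, map_sub, hBianchi, smul_smul, mul_inv_cancel₀ hlΛ, one_smul]
    abel
  refine ⟨h1, h2, fun hinj => ?_⟩
  have hω := hinj _ h1 h2
  exact ⟨hω, by rw [← sub_eq_zero, hsolve, hω, map_zero]⟩
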